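/- arXiv:2409.17711 — 3 statements merged into one kernel-verified Lean document; each statement's English description precedes it below -/
import Mathlib

section
/- (Main theorem) Let K ≥ 2, μ, ν ∈ (0,1), and let π ∈ ℝ^K be a probability vector with all entries positive. Let T be the RTL transition matrix and Δ = [1, 1/2, …, 1/K]ᵀ the MRR vector. If μ < (π_{i+1}/π_i)·ν for all 1 ≤ i ≤ K−1, then the expected-MRR gain G = π·(T − I)·Δᵀ is strictly positive. -/
open Matrix

/-- The RTL transition matrix on `Fin K` (position `i : Fin K` corresponds to rank `i+1`). -/
noncomputable def rtlT (K : ℕ) (μ ν : ℝ) : Matrix (Fin K) (Fin K) ℝ :=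
  Matrix.of fun i j =>
    if i.val + 1 < K then
      if j.val = i.val + 1 then μ
      else if 0 < j.val ∧ j.val ≤ i.val then (1 - μ) * (1 - ν) * ν ^ (i.val - j.val)
      else if j.val = 0 then (1 - μ) * ν ^ i.val
      else 0
    else
      if j.val = 0 then ν ^ (K - 1)
      else (1 - ν) * ν ^ (K - 1 - j.val)

/-- The MRR metric vector `Δ_k = 1/k` (rank `k = i+1` for `i : Fin K`). -/
noncomputable def mrr (K : ℕ) : Fin K → ℝ := fun i => 1 / ((i.val : ℝ) + 1)

/-!
Row `i` of `T` is a mixture: with probability `1 - cᵢ` the item drops one rank (`cᵢ = 1 - μ`,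
and `c = 1` on the last rank), otherwise it climbs left, passing each comparison with
probability `ν`.  By Abel summation the gain is `∑ₖ (Δₖ - Δₖ₊₁) (Wₖ - πₖ)`, where `Wₖ - πₖ` is
the net mass one pass moves from ranks `> k` to ranks `≤ k` and `Wₖ = ∑_{i ≥ k} cᵢ πᵢ ν^(i-k)`.
Since `Wₖ = (1 - μ) πₖ + ν Wₖ₊₁`, downward induction using `μ πₖ < ν πₖ₊₁` gives `Wₖ > πₖ` for
every `k < K - 1`, so every term of the sum is positive.
-/

open Finset

noncomputable def leftJump (ν : ℝ) (i j : ℕ) : ℝ :=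
  if j = 0 then ν ^ i else if j ≤ i then (1 - ν) * ν ^ (i - j) else 0

theorem sum_range_succ_leftJump (ν : ℝ) (i k : ℕ) :
    ∑ j ∈ range (k + 1), leftJump ν i j = ν ^ (i - k) := by
  induction k with
  | zero => simp [leftJump]
  | succ k ih =>
    rw [sum_range_succ, ih]
    rcases lt_or_ge k i with hki | hik
    · rw [leftJump, if_neg k.succ_ne_zero, if_pos (show k + 1 ≤ i from hki),
        show i - k = i - (k + 1) + 1 by omega]
      ring
    · rw [leftJump, if_neg k.succ_ne_zero, if_neg (by omega), Nat.sub_eq_zero_of_le hik,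
        Nat.sub_eq_zero_of_le (by omega)]
      ring

theorem sum_range_mul_eq_sum_sub_mul_partialSum (f g : ℕ → ℝ) {n : ℕ}
    (hg : ∑ j ∈ range n, g j = 0) :
    ∑ j ∈ range n, f j * g j = ∑ k ∈ range (n - 1), (f k - f (k + 1)) * ∑ j ∈ range (k + 1), g j := by
  simp only [← smul_eq_mul]
  rw [sum_range_by_parts, hg, smul_zero, zero_sub, ← sum_neg_distrib]
  simp only [← neg_smul, neg_sub]

noncomputable def rtlStay (K : ℕ) (μ : ℝ) (i : ℕ) : ℝ := if i + 1 < K then 1 - μ else 1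

noncomputable def rtlEntry (K : ℕ) (μ ν : ℝ) (i j : ℕ) : ℝ :=
  rtlStay K μ i * leftJump ν i j + (1 - rtlStay K μ i) * if j = i + 1 then 1 else 0

/-- Net mass that row `i` of `T - 1` moves from ranks `> k` to ranks `≤ k`. -/
noncomputable def rtlCutFlow (K : ℕ) (μ ν : ℝ) (i k : ℕ) : ℝ :=
  if k ≤ i then rtlStay K μ i * ν ^ (i - k) - (if i = k then 1 else 0) else 0

noncomputable def rtlTail (K : ℕ) (μ ν : ℝ) (p : ℕ → ℝ) (k : ℕ) : ℝ :=
  ∑ i ∈ Ico k K, rtlStay K μ i * p i * ν ^ (i - k)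

section

variable {K : ℕ} {μ ν : ℝ}

theorem rtlT_apply (i j : Fin K) : rtlT K μ ν i j = rtlEntry K μ ν i j := by
  have hj := j.isLt
  simp only [rtlT, Matrix.of_apply, rtlEntry, rtlStay, leftJump]
  by_cases hlast : (i : ℕ) + 1 < K
  · split_ifs <;> first | omega | ring
  · have hi : (i : ℕ) = K - 1 := by omega
    split_ifs <;> first | omega | (rw [hi]; ring)

theorem dotProduct_vecMul_rtlT_sub_one (π : Fin K → ℝ) (p : ℕ → ℝ) (hp : ∀ i : Fin K, π i = p i)
    (Δ : ℕ → ℝ) :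
    π ᵥ* (rtlT K μ ν - 1) ⬝ᵥ (fun i : Fin K => Δ i) =
      ∑ i ∈ range K, p i * (∑ j ∈ range K, rtlEntry K μ ν i j * Δ j - Δ i) := by
  rw [← dotProduct_mulVec, sub_mulVec, one_mulVec]
  simp only [dotProduct, mulVec, Pi.sub_apply, rtlT_apply, hp]
  rw [← Fin.sum_univ_eq_sum_range]
  refine sum_congr rfl fun i _ => ?_
  rw [← Fin.sum_univ_eq_sum_range (fun j => rtlEntry K μ ν i j * Δ j)]

theorem sum_range_succ_rtlEntry_sub (i k : ℕ) :
    ∑ j ∈ range (k + 1), (rtlEntry K μ ν i j - if j = i then 1 else 0) = rtlCutFlow K μ ν i k := by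
  simp only [sum_sub_distrib, rtlEntry, sum_add_distrib, ← mul_sum, sum_range_succ_leftJump,
    sum_ite_eq', mem_range, rtlCutFlow]
  rcases lt_trichotomy i k with hik | rfl | hki
  · simp [hik, hik.not_ge, Nat.sub_eq_zero_of_le hik.le, Nat.lt_succ_of_lt hik]
  · simp
  · simp [hki.le, hki.ne', hki.not_gt, show ¬ i < k + 1 by omega]

theorem sum_range_rtlEntry_mul_sub (Δ : ℕ → ℝ) {i : ℕ} (hi : i < K) :
    ∑ j ∈ range K, rtlEntry K μ ν i j * Δ j - Δ i =
      ∑ k ∈ range (K - 1), (Δ k - Δ (k + 1)) * rtlCutFlow K μ ν i k := by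
  have hK : K - 1 + 1 = K := by omega
  have hmass : ∑ j ∈ range K, (rtlEntry K μ ν i j - if j = i then 1 else 0) = 0 := by
    rw [← hK, sum_range_succ_rtlEntry_sub, rtlCutFlow]
    by_cases hlast : i + 1 < K
    · simp [show ¬ K - 1 ≤ i by omega]
    · simp [show i = K - 1 by omega, rtlStay]
  have hrow : ∑ j ∈ range K, rtlEntry K μ ν i j * Δ j - Δ i =
      ∑ j ∈ range K, Δ j * (rtlEntry K μ ν i j - if j = i then 1 else 0) := by
    simp only [mul_sub, mul_ite, mul_one, mul_zero, sum_sub_distrib, sum_ite_eq', mem_range,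
      if_pos hi, mul_comm (Δ _) (rtlEntry _ _ _ _ _)]
  simp only [hrow, sum_range_mul_eq_sum_sub_mul_partialSum Δ _ hmass, sum_range_succ_rtlEntry_sub]

theorem sum_range_mul_rtlCutFlow (p : ℕ → ℝ) {k : ℕ} (hk : k < K) :
    ∑ i ∈ range K, p i * rtlCutFlow K μ ν i k = rtlTail K μ ν p k - p k := by
  have hfilter : (range K).filter (k ≤ ·) = Ico k K := by
    ext i
    simp only [mem_filter, mem_range, mem_Ico]
    omega
  simp only [rtlCutFlow, mul_ite, mul_zero]
  rw [← sum_filter, hfilter]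
  simp only [mul_sub, mul_ite, mul_one, mul_zero, sum_sub_distrib, sum_ite_eq', mem_Ico,
    le_refl, hk, and_self, if_true, rtlTail]
  congr 1
  exact sum_congr rfl fun i _ => by ring

theorem sum_gain_eq (p Δ : ℕ → ℝ) :
    ∑ i ∈ range K, p i * (∑ j ∈ range K, rtlEntry K μ ν i j * Δ j - Δ i) =
      ∑ k ∈ range (K - 1), (Δ k - Δ (k + 1)) * (rtlTail K μ ν p k - p k) := by
  rw [sum_congr rfl fun i hi => by rw [sum_range_rtlEntry_mul_sub Δ (mem_range.1 hi)]]
  simp_rw [mul_sum]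
  rw [sum_comm]
  refine sum_congr rfl fun k hk => ?_
  rw [← sum_range_mul_rtlCutFlow p (by have := mem_range.1 hk; omega), mul_sum]
  exact sum_congr rfl fun i _ => by ring

theorem rtlTail_eq_add (p : ℕ → ℝ) {k : ℕ} (hk : k < K) :
    rtlTail K μ ν p k = rtlStay K μ k * p k + ν * rtlTail K μ ν p (k + 1) := by
  rw [rtlTail, sum_eq_sum_Ico_succ_bot hk, Nat.sub_self, pow_zero, mul_one, rtlTail, mul_sum]
  congr 1
  refine sum_congr rfl fun i hi => ?_
  rw [show i - k = i - (k + 1) + 1 by have := (mem_Ico.1 hi).1; omega, pow_succ]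
  ring

theorem lt_rtlTail_of_le {p : ℕ → ℝ} (hν : 0 ≤ ν) {m : ℕ} (hm : m + 1 < K)
    (hstep : μ * p m < ν * p (m + 1)) (h : p (m + 1) ≤ rtlTail K μ ν p (m + 1)) :
    p m < rtlTail K μ ν p m := by
  rw [rtlTail_eq_add p (by omega), rtlStay, if_pos hm]
  linarith [mul_le_mul_of_nonneg_left h hν]

theorem le_rtlTail {p : ℕ → ℝ} (hν : 0 ≤ ν) (hstep : ∀ m, m + 1 < K → μ * p m < ν * p (m + 1))
    {m : ℕ} (hm : m < K) : p m ≤ rtlTail K μ ν p m := by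
  have hK : 0 < K := by omega
  have hle : m ≤ K - 1 := by omega
  clear hm
  induction hle using Nat.decreasingInduction with
  | self =>
    rw [rtlTail_eq_add p (by omega), rtlStay, if_neg (by omega), Nat.sub_add_cancel (by omega),
      rtlTail, Ico_self, sum_empty, one_mul, mul_zero, add_zero]
  | of_succ m hm ih => exact (lt_rtlTail_of_le hν (by omega) (hstep m (by omega)) ih).le

theorem sum_gain_pos {p : ℕ → ℝ} (hK : 2 ≤ K) (hν : 0 ≤ ν)
    (hstep : ∀ m, m + 1 < K → μ * p m < ν * p (m + 1)) {Δ : ℕ → ℝ} (hΔ : StrictAnti Δ) :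
    0 < ∑ i ∈ range K, p i * (∑ j ∈ range K, rtlEntry K μ ν i j * Δ j - Δ i) := by
  rw [sum_gain_eq]
  refine sum_pos (fun k hk => mul_pos (sub_pos.2 (hΔ k.lt_succ_self)) (sub_pos.2 ?_))
    ⟨0, mem_range.2 (by omega)⟩
  have hk := mem_range.1 hk
  exact lt_rtlTail_of_le hν (by omega) (hstep k (by omega)) (le_rtlTail hν hstep (by omega))

end

theorem rtl_gain_pos_general (K : ℕ) (hK : 2 ≤ K) (μ ν : ℝ)
    (hν : ν ∈ Set.Ioo (0:ℝ) 1)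
    (π : Fin K → ℝ) (hpos : ∀ i, 0 < π i)
    (hcond : ∀ i : Fin K, (h : i.val + 1 < K) → μ < (π ⟨i.val + 1, h⟩ / π i) * ν) :
    0 < dotProduct (Matrix.vecMul π (rtlT K μ ν - 1)) (mrr K) := by
  let p : ℕ → ℝ := fun n => if h : n < K then π ⟨n, h⟩ else 0
  have hp : ∀ i : Fin K, π i = p i := fun i => by simp [p]
  have hstep : ∀ m, m + 1 < K → μ * p m < ν * p (m + 1) := by
    intro m hm
    have h := hcond ⟨m, by omega⟩ hm
    rw [div_mul_eq_mul_div, lt_div_iff₀ (hpos _)] at h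
    simpa [p, hm, show m < K by omega, mul_comm] using h
  let Δ : ℕ → ℝ := fun n => 1 / ((n : ℝ) + 1)
  have hΔ : StrictAnti Δ := fun m n hmn => by
    simp only [Δ]
    gcongr
  rw [show mrr K = fun i : Fin K => Δ i from rfl, dotProduct_vecMul_rtlT_sub_one π p hp]
  exact sum_gain_pos hK hν.1.le hstep hΔ

/-- Main theorem: if `μ < (π_{i+1}/π_i)·ν` for all `1 ≤ i ≤ K−1`, then the expected-MRR
gain `G = π·(T − I)·Δᵀ` of one RTL pass is strictly positive. -/
theorem rtl_gain_pos (K : ℕ) (hK : 2 ≤ K) (μ ν : ℝ)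
    (hμ : μ ∈ Set.Ioo (0:ℝ) 1) (hν : ν ∈ Set.Ioo (0:ℝ) 1)
    (π : Fin K → ℝ) (hpos : ∀ i, 0 < π i) (hsum : ∑ i, π i = 1)
    (hcond : ∀ i : Fin K, (h : i.val + 1 < K) → μ < (π ⟨i.val + 1, h⟩ / π i) * ν) :
    0 < dotProduct (Matrix.vecMul π (rtlT K μ ν - 1)) (mrr K) :=
  rtl_gain_pos_general K hK μ ν hν π hpos hcond
end

section
/- Let K ≥ 2, μ, ν ∈ [0,1], π ∈ ℝ^K a probability vector with nonnegative entries, and for 2 ≤ k ≤ K−2 define G_k = ∑_{i=k+1}^{K−1} π_{i+1}·ν^k/((i−k)(i−k+1)) − π_i·μ·ν^{k−1}/((i−k)(i−k+1)) (the sum of all degree-k terms of the MRR gain; indices as in the paper's grouping). If μ·π_i ≤ ν·π_{i+1} for all 1 ≤ i ≤ K−1, then G_k ≥ 0. -/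
/-! Each pair of terms with the same denominator is nonnegative on its own: multiplying the ratio
condition `μ·πᵢ ≤ ν·πᵢ₊₁` by `ν^(k-1) ≥ 0` turns it into `πᵢ·μ·ν^(k-1) ≤ πᵢ₊₁·ν^k`. -/

lemma mul_mul_pow_pred_le_mul_pow {μ ν a b : ℝ} {k : ℕ} (hν : 0 ≤ ν) (hk : k ≠ 0)
    (h : μ * a ≤ ν * b) : a * μ * ν ^ (k - 1) ≤ b * ν ^ k := by
  obtain ⟨n, rfl⟩ := Nat.exists_eq_succ_of_ne_zero hk
  calc a * μ * ν ^ (n + 1 - 1) = ν ^ n * (μ * a) := by simp only [Nat.add_sub_cancel]; ring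
    _ ≤ ν ^ n * (ν * b) := mul_le_mul_of_nonneg_left h (pow_nonneg hν n)
    _ = b * ν ^ (n + 1) := by ring

theorem degree_k_gain_nonneg_general (K k : ℕ) (hk : 2 ≤ k)
    (μ ν : ℝ) (hν : ν ∈ Set.Icc (0:ℝ) 1)
    (π : ℕ → ℝ)
    (hcond : ∀ i, 1 ≤ i → i ≤ K - 1 → μ * π i ≤ ν * π (i + 1)) :
    0 ≤ ∑ i ∈ Finset.Icc (k + 1) (K - 1),
        (π (i + 1) * ν ^ k / (((i - k) * (i - k + 1) : ℕ) : ℝ)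
          - π i * μ * ν ^ (k - 1) / (((i - k) * (i - k + 1) : ℕ) : ℝ)) := by
  refine Finset.sum_nonneg fun i hi => sub_nonneg.2 ?_
  obtain ⟨hki, hiK⟩ := Finset.mem_Icc.1 hi
  have hratio := hcond i (by omega) hiK
  exact div_le_div_of_nonneg_right
    (mul_mul_pow_pred_le_mul_pow hν.1 (by omega) hratio) (Nat.cast_nonneg _)

/-- The degree-`k` homogeneous part `G_k` of the expected-MRR gain is nonnegative under
the ratio condition `μ·πᵢ ≤ ν·πᵢ₊₁`. -/
theorem degree_k_gain_nonneg (K k : ℕ) (hk : 2 ≤ k) (hkK : k ≤ K - 2) (hK : 2 ≤ K)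
    (μ ν : ℝ) (hμ : μ ∈ Set.Icc (0:ℝ) 1) (hν : ν ∈ Set.Icc (0:ℝ) 1)
    (π : ℕ → ℝ) (hnn : ∀ i ∈ Finset.Icc 1 K, 0 ≤ π i)
    (hsum : ∑ i ∈ Finset.Icc 1 K, π i = 1)
    (hcond : ∀ i, 1 ≤ i → i ≤ K - 1 → μ * π i ≤ ν * π (i + 1)) :
    0 ≤ ∑ i ∈ Finset.Icc (k + 1) (K - 1),
        (π (i + 1) * ν ^ k / (((i - k) * (i - k + 1) : ℕ) : ℝ)
          - π i * μ * ν ^ (k - 1) / (((i - k) * (i - k + 1) : ℕ) : ℝ)) :=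
  degree_k_gain_nonneg_general K k hk μ ν hν π hcond
end

section
/- Let ν ∈ [0,1) and i ≥ 2, and define Λ_i = ∑_{j=1}^{i−1} [i(i+1)/(j(j+1))]·ν^{i−j}. Then the map ν ↦ Λ_i/(Λ_i + 1) is monotonically non-decreasing on [0,1), and for every i ≥ 2, Λ_i ≥ [i(i+1)/((i−1)i)]·ν, so Λ_i/(Λ_i+1) ≥ (cν)/(cν+1) with c = (i+1)/(i−1) ≥ 1; hence μ ≤ ν/(ν+1) implies μ ≤ Λ_i/(Λ_i+1). -/
/-- `Λ_i = ∑_{j=1}^{i−1} (i(i+1)/(j(j+1)))·ν^{i−j}`. -/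
noncomputable def Lam (i : ℕ) (ν : ℝ) : ℝ :=
  ∑ j ∈ Finset.Icc 1 (i - 1), ((i * (i + 1) : ℕ) : ℝ) / ((j * (j + 1) : ℕ) : ℝ) * ν ^ (i - j)

lemma lam_nonneg (i : ℕ) {ν : ℝ} (hν : 0 ≤ ν) : 0 ≤ Lam i ν := by
  apply Finset.sum_nonneg
  intro j _
  exact mul_nonneg (div_nonneg (by positivity) (by positivity)) (pow_nonneg hν _)

lemma lam_mono (i : ℕ) {ν₁ ν₂ : ℝ} (h0 : 0 ≤ ν₁) (h : ν₁ ≤ ν₂) :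
    Lam i ν₁ ≤ Lam i ν₂ := by
  apply Finset.sum_le_sum
  intro j _
  exact mul_le_mul_of_nonneg_left (pow_le_pow_left₀ h0 h _)
    (div_nonneg (by positivity) (by positivity))

lemma ratio_mono {x y : ℝ} (hx : 0 ≤ x) (h : x ≤ y) : x / (x + 1) ≤ y / (y + 1) := by
  rw [div_le_div_iff₀ (by linarith) (by linarith)]
  nlinarith

lemma lam_lb (i : ℕ) (hi : 2 ≤ i) {ν : ℝ} (hν : 0 ≤ ν) :
    (((i : ℝ) + 1) / ((i : ℝ) - 1)) * ν ≤ Lam i ν := by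
  have hmem : i - 1 ∈ Finset.Icc 1 (i - 1) := by
    simp [Finset.mem_Icc]; omega
  have hsingle := Finset.single_le_sum
    (f := fun j => ((i * (i + 1) : ℕ) : ℝ) / ((j * (j + 1) : ℕ) : ℝ) * ν ^ (i - j))
    (fun j _ => mul_nonneg (div_nonneg (by positivity) (by positivity)) (pow_nonneg hν _)) hmem
  refine le_trans ?_ hsingle
  have h1 : i - (i - 1) = 1 := by omega
  have h2 : i - 1 + 1 = i := by omega
  rw [h1, h2, pow_one]
  have hi1 : (1 : ℝ) ≤ (i : ℝ) := by exact_mod_cast Nat.one_le_of_lt hi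
  have hcast : ((i - 1 : ℕ) : ℝ) = (i : ℝ) - 1 := by
    push_cast [Nat.cast_sub (by omega : 1 ≤ i)]; ring
  have hipos : (0 : ℝ) < (i : ℝ) := by linarith
  have him1 : (0 : ℝ) < (i : ℝ) - 1 := by
    have : (2 : ℝ) ≤ (i : ℝ) := by exact_mod_cast hi
    linarith
  apply mul_le_mul_of_nonneg_right _ hν
  push_cast [hcast]
  rw [div_le_div_iff₀ him1 (by positivity)]
  ring_nf
  nlinarith

/-- The map `ν ↦ Λ_i/(Λ_i+1)` is monotone non-decreasing on `[0,1)`,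
`Λ_i ≥ ((i+1)/(i−1))·ν`, and hence `μ ≤ ν/(ν+1)` implies `μ ≤ Λ_i/(Λ_i+1)`. -/
theorem lam_ratio_bounds (i : ℕ) (hi : 2 ≤ i) :
    (∀ ν₁ ν₂ : ℝ, 0 ≤ ν₁ → ν₁ ≤ ν₂ → ν₂ < 1 →
      Lam i ν₁ / (Lam i ν₁ + 1) ≤ Lam i ν₂ / (Lam i ν₂ + 1)) ∧
    (∀ ν : ℝ, 0 ≤ ν → ν < 1 → (((i : ℝ) + 1) / ((i : ℝ) - 1)) * ν ≤ Lam i ν) ∧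
    (∀ μ ν : ℝ, 0 ≤ ν → ν < 1 → μ ≤ ν / (ν + 1) → μ ≤ Lam i ν / (Lam i ν + 1)) := by
  refine ⟨fun ν₁ ν₂ h0 h12 _ => ratio_mono (lam_nonneg i h0) (lam_mono i h0 h12),
    fun ν h0 _ => lam_lb i hi h0, fun μ ν h0 _ hμ => ?_⟩
  have hc : (1 : ℝ) ≤ ((i : ℝ) + 1) / ((i : ℝ) - 1) := by
    have h2 : (2 : ℝ) ≤ (i : ℝ) := by exact_mod_cast hi
    rw [le_div_iff₀ (by linarith)]; linarith
  have hν : ν ≤ Lam i ν := le_trans (by nlinarith [mul_le_mul_of_nonneg_right hc h0]) (lam_lb i hi h0)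
  exact le_trans hμ (ratio_mono h0 hν)
end
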